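/- Let A ∈ ℝ^{m×n}, V ∈ ℝ^{m×l₁} with orthonormal columns, and Ω₂ ∈ ℝ^{l₂×m} with l₂ ≥ l₁ such that Ω₂V has full column rank. Then with B = (Ω₂V)† Ω₂ A, we have ‖A − VB‖₂ ≤ (1 + ‖V(Ω₂V)†Ω₂‖₂) · ‖A − VVᵀA‖₂. -/

import Mathlib

open Matrix BigOperators

theorem Matrix.isHermitian_transpose_mul_self {m n α : Type*} [Fintype m] [CommSemiring α]
    [StarRing α] [TrivialStar α] (A : Matrix m n α) : (Aᵀ * A).IsHermitian := by
  simpa [conjTranspose_eq_transpose_of_trivial] using isHermitian_conjTranspose_mul_self A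

noncomputable def singularValue {m n : ℕ} (A : Matrix (Fin m) (Fin n) ℝ) : Fin n → ℝ :=
  fun j =>
    Real.sqrt ((Matrix.isHermitian_transpose_mul_self A).eigenvalues
      (Tuple.sort (fun i => -(Matrix.isHermitian_transpose_mul_self A).eigenvalues i) j))

noncomputable def matSpectralNorm {m n : ℕ} (A : Matrix (Fin m) (Fin n) ℝ) : ℝ :=
  ‖LinearMap.toContinuousLinearMap (Matrix.toEuclideanLin A)‖

noncomputable def frobNorm {m n : ℕ} (A : Matrix (Fin m) (Fin n) ℝ) : ℝ :=
  Real.sqrt (∑ i, ∑ j, (A i j)^2)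

noncomputable def pinv {a b : ℕ} (W : Matrix (Fin a) (Fin b) ℝ) : Matrix (Fin b) (Fin a) ℝ :=
  if a ≤ b then Wᵀ * (W * Wᵀ)⁻¹ else (Wᵀ * W)⁻¹ * Wᵀ

/-!
The residual of the single-pass approximation factors through the projection residual: if
`P = V (Ω₂V)† Ω₂`, then `P V = V` because `(Ω₂V)†(Ω₂V) = I`, hence
`A - V B = A - P A = (I - P)(A - V Vᵀ A)`, and the bound is the triangle inequality together with
submultiplicativity of the spectral norm.
-/

theorem Matrix.isUnit_of_rank_eq_card {K n : Type*} [Field K] [Fintype n] [DecidableEq n]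
    (M : Matrix n n K) (h : M.rank = Fintype.card n) : IsUnit M := by
  rw [← mulVec_surjective_iff_isUnit]
  refine (LinearMap.range_eq_top (f := M.mulVecLin)).mp (Submodule.eq_top_of_finrank_eq ?_)
  rw [Module.finrank_fintype_fun_eq_card, ← h, rank]

theorem Matrix.sub_mul_mul_eq_of_mul_eq_one {R m k n : Type*} [Ring R] [Fintype m] [Fintype k]
    [DecidableEq k] {V : Matrix m k R} {L : Matrix k m R} (hL : L * V = 1)
    (A : Matrix m n R) (C : Matrix k n R) :
    A - V * (L * A) = (A - V * C) - V * L * (A - V * C) := by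
  have hVC : V * L * (V * C) = V * C := by
    rw [Matrix.mul_assoc, ← Matrix.mul_assoc L, hL, Matrix.one_mul]
  rw [Matrix.mul_sub, hVC, Matrix.mul_assoc]
  abel

theorem pinv_mul_self_of_rank_eq {a b : ℕ} (W : Matrix (Fin a) (Fin b) ℝ) (h : W.rank = b) :
    pinv W * W = 1 := by
  have hWtW : (Wᵀ * W)⁻¹ * (Wᵀ * W) = 1 := by
    refine nonsing_inv_mul _ ((isUnit_iff_isUnit_det _).mp (isUnit_of_rank_eq_card _ ?_))
    rw [rank_transpose_mul_self, h, Fintype.card_fin]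
  unfold pinv
  split_ifs with hab
  · have hWWt : (W * Wᵀ) * (W * Wᵀ)⁻¹ = 1 := by
      refine mul_nonsing_inv _ ((isUnit_iff_isUnit_det _).mp (isUnit_of_rank_eq_card _ ?_))
      rw [rank_self_mul_transpose, Fintype.card_fin, h]
      exact le_antisymm (h ▸ W.rank_le_height) hab
    -- a square `W` of full rank: insert `(WᵀW)⁻¹(WᵀW)` on the left and cancel `(WWᵀ)(WWᵀ)⁻¹`
    calc Wᵀ * (W * Wᵀ)⁻¹ * W
        = (Wᵀ * W)⁻¹ * (Wᵀ * ((W * Wᵀ) * (W * Wᵀ)⁻¹) * W) := by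
          rw [← Matrix.one_mul (Wᵀ * (W * Wᵀ)⁻¹ * W), ← hWtW]
          simp only [Matrix.mul_assoc]
      _ = 1 := by rw [hWWt, Matrix.mul_one, hWtW]
  · rw [Matrix.mul_assoc, hWtW]

section matSpectralNorm

variable {m k n : ℕ}

theorem matSpectralNorm_sub_le (X Y : Matrix (Fin m) (Fin n) ℝ) :
    matSpectralNorm (X - Y) ≤ matSpectralNorm X + matSpectralNorm Y := by
  unfold matSpectralNorm
  rw [map_sub, map_sub]
  exact norm_sub_le _ _

theorem matSpectralNorm_mul_le (P : Matrix (Fin m) (Fin k) ℝ) (M : Matrix (Fin k) (Fin n) ℝ) :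
    matSpectralNorm (P * M) ≤ matSpectralNorm P * matSpectralNorm M := by
  have hcomp : LinearMap.toContinuousLinearMap (toEuclideanLin (P * M)) =
      (LinearMap.toContinuousLinearMap (toEuclideanLin P)).comp
        (LinearMap.toContinuousLinearMap (toEuclideanLin M)) := by
    ext v
    simp [toLpLin_apply, mulVec_mulVec]
  unfold matSpectralNorm
  rw [hcomp]
  exact ContinuousLinearMap.opNorm_comp_le _ _

theorem matSpectralNorm_sub_mul_le (P : Matrix (Fin m) (Fin m) ℝ) (E : Matrix (Fin m) (Fin n) ℝ) :
    matSpectralNorm (E - P * E) ≤ (1 + matSpectralNorm P) * matSpectralNorm E :=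
  calc matSpectralNorm (E - P * E)
      ≤ matSpectralNorm E + matSpectralNorm P * matSpectralNorm E :=
        (matSpectralNorm_sub_le E (P * E)).trans (add_le_add_right (matSpectralNorm_mul_le P E) _)
    _ = (1 + matSpectralNorm P) * matSpectralNorm E := by ring

end matSpectralNorm

theorem single_pass_spectral_bound_general {m n l₁ l₂ : ℕ} (A : Matrix (Fin m) (Fin n) ℝ)
    (V : Matrix (Fin m) (Fin l₁) ℝ)
    (Ω₂ : Matrix (Fin l₂) (Fin m) ℝ)
    (hrank : (Ω₂ * V).rank = l₁)
    (B : Matrix (Fin l₁) (Fin n) ℝ) (hB : B = pinv (Ω₂ * V) * (Ω₂ * A)) :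
    matSpectralNorm (A - V * B) ≤
      (1 + matSpectralNorm (V * pinv (Ω₂ * V) * Ω₂)) * matSpectralNorm (A - V * (Vᵀ * A)) := by
  have hL : pinv (Ω₂ * V) * Ω₂ * V = 1 := by
    rw [Matrix.mul_assoc]
    exact pinv_mul_self_of_rank_eq _ hrank
  rw [hB, ← Matrix.mul_assoc (pinv _), sub_mul_mul_eq_of_mul_eq_one hL A (Vᵀ * A),
    ← Matrix.mul_assoc V (pinv _)]
  exact matSpectralNorm_sub_mul_le _ _

/-- Single-pass error bound in the spectral norm:
‖A − VB‖₂ ≤ (1 + ‖V(Ω₂V)†Ω₂‖₂)·‖A − VVᵀA‖₂ with B = (Ω₂V)†Ω₂A. -/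
theorem single_pass_spectral_bound {m n l₁ l₂ : ℕ} (A : Matrix (Fin m) (Fin n) ℝ)
    (V : Matrix (Fin m) (Fin l₁) ℝ) (hV : Vᵀ * V = 1)
    (Ω₂ : Matrix (Fin l₂) (Fin m) ℝ) (hl : l₁ ≤ l₂)
    (hrank : (Ω₂ * V).rank = l₁)
    (B : Matrix (Fin l₁) (Fin n) ℝ) (hB : B = pinv (Ω₂ * V) * (Ω₂ * A)) :
    matSpectralNorm (A - V * B) ≤
      (1 + matSpectralNorm (V * pinv (Ω₂ * V) * Ω₂)) * matSpectralNorm (A - V * (Vᵀ * A)) :=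
  single_pass_spectral_bound_general A V Ω₂ hrank B hB
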